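/- For the Top-k operator, for all x ∈ ℝ^d it holds that (k/d)·‖x‖² ≤ ‖Top_k(x)‖² and moreover ‖Top_k(x)‖² = ⟨Top_k(x), x⟩ ≤ ‖x‖². -/

import Mathlib

/-!
Each of the `k` kept squares `x i ^ 2` dominates each of the `d - k` discarded ones, so summing
over all pairs gives `k · (discarded mass) ≤ (d - k) · (kept mass)`, i.e. `k ‖x‖² ≤ d ‖Top_k x‖²`.
-/

open scoped RealInnerProductSpace
open Finset

theorem Finset.card_nsmul_sum_le_card_nsmul_sum_of_compl_le {ι M : Type*} [Fintype ι]
    [DecidableEq ι] [AddCommMonoid M] [PartialOrder M] [IsOrderedAddMonoid M]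
    (g : ι → M) (S : Finset ι) (hg : ∀ i ∈ S, ∀ j ∉ S, g j ≤ g i) :
    #S • ∑ i, g i ≤ Fintype.card ι • ∑ i ∈ S, g i := by
  have hcompl : #S • ∑ j ∈ Sᶜ, g j ≤ #Sᶜ • ∑ i ∈ S, g i := by
    calc #S • ∑ j ∈ Sᶜ, g j = ∑ j ∈ Sᶜ, ∑ _i ∈ S, g j := by
          simp only [sum_const, smul_sum]
      _ ≤ ∑ _j ∈ Sᶜ, ∑ i ∈ S, g i :=
          sum_le_sum fun j hj ↦ sum_le_sum fun i hi ↦ hg i hi j (mem_compl.mp hj)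
      _ = #Sᶜ • ∑ i ∈ S, g i := sum_const _
  calc #S • ∑ i, g i = #S • ∑ i ∈ S, g i + #S • ∑ j ∈ Sᶜ, g j := by
        rw [← sum_add_sum_compl S, smul_add]
    _ ≤ #S • ∑ i ∈ S, g i + #Sᶜ • ∑ i ∈ S, g i := add_le_add le_rfl hcompl
    _ = Fintype.card ι • ∑ i ∈ S, g i := by rw [← add_smul, card_add_card_compl]

namespace EuclideanSpace

variable {ι : Type*} [Fintype ι] [DecidableEq ι]

theorem inner_eq_sum_of_eq_ite {x y : EuclideanSpace ℝ ι} {S : Finset ι}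
    (hy : ∀ i, y i = if i ∈ S then x i else 0) (z : EuclideanSpace ℝ ι) :
    ⟪y, z⟫ = ∑ i ∈ S, x i * z i := by
  simp [PiLp.inner_apply, hy, mul_comm]

theorem inner_self_eq_inner_of_eq_ite {x y : EuclideanSpace ℝ ι} {S : Finset ι}
    (hy : ∀ i, y i = if i ∈ S then x i else 0) : ⟪y, y⟫ = ⟪y, x⟫ := by
  rw [inner_eq_sum_of_eq_ite hy, inner_eq_sum_of_eq_ite hy]
  exact sum_congr rfl fun i hi ↦ by rw [hy, if_pos hi]

end EuclideanSpace

theorem topk_bounds_general (d k : ℕ)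
    (x y : EuclideanSpace ℝ (Fin d)) (S : Finset (Fin d)) (hS : S.card = k)
    (hlarge : ∀ i ∈ S, ∀ j ∉ S, |x j| ≤ |x i|)
    (hy : ∀ i, y i = if i ∈ S then x i else 0) :
    ((k : ℝ) / d) * ‖x‖ ^ 2 ≤ ‖y‖ ^ 2 ∧ ‖y‖ ^ 2 = ⟪y, x⟫ ∧ ⟪y, x⟫ ≤ ‖x‖ ^ 2 := by
  have hnorm_y : ‖y‖ ^ 2 = ⟪y, x⟫ := by
    rw [← real_inner_self_eq_norm_sq, EuclideanSpace.inner_self_eq_inner_of_eq_ite hy]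
  have hinner : ⟪y, x⟫ = ∑ i ∈ S, x i ^ 2 := by
    simp only [EuclideanSpace.inner_eq_sum_of_eq_ite hy, sq]
  have hnorm_x : ‖x‖ ^ 2 = ∑ i, x i ^ 2 := EuclideanSpace.real_norm_sq_eq x
  have hmean : (k : ℝ) * ∑ i, x i ^ 2 ≤ d * ∑ i ∈ S, x i ^ 2 := by
    simpa only [nsmul_eq_mul, hS, Fintype.card_fin] using
      card_nsmul_sum_le_card_nsmul_sum_of_compl_le (fun i ↦ x i ^ 2) S
        fun i hi j hj ↦ sq_le_sq.mpr (hlarge i hi j hj)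
  refine ⟨?_, hnorm_y, ?_⟩
  · rw [div_mul_eq_mul_div, hnorm_y, hinner, hnorm_x]
    exact div_le_of_le_mul₀ d.cast_nonneg (sum_nonneg fun i _ ↦ sq_nonneg _) (by linarith)
  · rw [hinner, hnorm_x]
    exact sum_le_sum_of_subset_of_nonneg (subset_univ S) fun i _ _ ↦ sq_nonneg _

/-- Top-k lower/upper bounds: `(k/d)‖x‖² ≤ ‖Top_k(x)‖² = ⟨Top_k(x), x⟩ ≤ ‖x‖²`. -/
theorem topk_bounds (d k : ℕ) (hk : 1 ≤ k) (hkd : k ≤ d)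
    (x y : EuclideanSpace ℝ (Fin d)) (S : Finset (Fin d)) (hS : S.card = k)
    (hlarge : ∀ i ∈ S, ∀ j ∉ S, |x j| ≤ |x i|)
    (hy : ∀ i, y i = if i ∈ S then x i else 0) :
    ((k : ℝ) / d) * ‖x‖ ^ 2 ≤ ‖y‖ ^ 2 ∧ ‖y‖ ^ 2 = ⟪y, x⟫ ∧ ⟪y, x⟫ ≤ ‖x‖ ^ 2 :=
  topk_bounds_general d k x y S hS hlarge hy
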